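/- Every finite tree T has a pure 2-cycle for the minority process, and T has a non-monochromatic pure 2-cycle for the minority process if and only if T contains an edge (u,w) with deg(u)≥3 and deg(w)≥3. -/

import Mathlib

open SimpleGraph Finset
open scoped Classical

variable {V : Type*}

/-- Number of neighbors of `v` with the same color as `v`. -/
noncomputable def sameCount (G : SimpleGraph V) [Fintype V] (c : V → Bool) (v : V) : ℕ :=
  ((G.neighborFinset v).filter fun u => c u = c v).card

/-- Number of neighbors of `v` with the opposite color. -/
noncomputable def diffCount (G : SimpleGraph V) [Fintype V] (c : V → Bool) (v : V) : ℕ :=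
  ((G.neighborFinset v).filter fun u => c u ≠ c v).card

/-- One round of the minority process. -/
noncomputable def minStep (G : SimpleGraph V) [Fintype V] (c : V → Bool) : V → Bool :=
  fun v => if sameCount G c v ≤ diffCount G c v then c v else !c v

/-- One round of the majority process. -/
noncomputable def majStep (G : SimpleGraph V) [Fintype V] (c : V → Bool) : V → Bool :=
  fun v => if diffCount G c v ≤ sameCount G c v then c v else !c v

/-- Number of edges of `F` incident to `v`. -/
noncomputable def incCount (F : Finset (Sym2 V)) (v : V) : ℕ :=
  (F.filter fun e => v ∈ e).card

/-- The monochromatic edges of a coloring. -/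
noncomputable def monoEdges (G : SimpleGraph V) [Fintype V] (c : V → Bool) : Finset (Sym2 V) :=
  G.edgeFinset.filter fun e => ∀ x ∈ e, ∀ y ∈ e, c x = c y

/-- The multichromatic edges of a coloring. -/
noncomputable def multiEdges (G : SimpleGraph V) [Fintype V] (c : V → Bool) : Finset (Sym2 V) :=
  G.edgeFinset.filter fun e => ∃ x ∈ e, ∃ y ∈ e, c x ≠ c y

/-!
A coloring is a pure 2-cycle exactly when every node has more neighbors of its own color than of
the other; then one step flips every color. For a tree the constant coloring always qualifies. In a
non-constant pure 2-cycle some edge `uw` is bichromatic, and each endpoint needs at least two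
neighbors of its own color besides the one across, so both have degree at least 3. Conversely,
every edge of a tree is a bridge; coloring the two sides of a bridge `uw` differently makes `uw` the
only bichromatic edge, which costs `u` and `w` one neighbor each and no other node anything.
-/

def IsPureTwoCycle (G : SimpleGraph V) [Fintype V] (c : V → Bool) : Prop :=
  (∀ v, minStep G c v ≠ c v) ∧ minStep G (minStep G c) = c

section Counts

variable [Fintype V] (G : SimpleGraph V) (c : V → Bool)

lemma sameCount_add_diffCount (v : V) : sameCount G c v + diffCount G c v = G.degree v := by
  rw [sameCount, diffCount, ← card_neighborFinset_eq_degree]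
  exact card_filter_add_card_filter_not _

lemma sameCount_not (v : V) : sameCount G (fun u => !c u) v = sameCount G c v := by
  simp only [sameCount, Bool.not_inj_iff]

lemma diffCount_not (v : V) : diffCount G (fun u => !c u) v = diffCount G c v := by
  simp only [diffCount, ne_eq, Bool.not_inj_iff]

lemma minStep_eq_not (h : ∀ v, diffCount G c v < sameCount G c v) :
    minStep G c = fun v => !c v := by
  funext v
  simp [minStep, (h v).not_ge]

lemma isPureTwoCycle_iff :
    IsPureTwoCycle G c ↔ ∀ v, diffCount G c v < sameCount G c v := by
  refine ⟨fun h v => not_le.mp fun hle => h.1 v (if_pos hle), fun h => ⟨fun v => ?_, ?_⟩⟩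
  · simp [minStep_eq_not G c h]
  · have h' : ∀ v, diffCount G (fun u => !c u) v < sameCount G (fun u => !c u) v := by
      simpa only [sameCount_not, diffCount_not] using h
    rw [minStep_eq_not G c h, minStep_eq_not G _ h']
    simp

lemma isPureTwoCycle_const (hdeg : ∀ v, 0 < G.degree v) (b : Bool) :
    IsPureTwoCycle G fun _ => b := by
  refine (isPureTwoCycle_iff G _).mpr fun v => ?_
  have hdiff : diffCount G (fun _ => b) v = 0 := by simp [diffCount]
  have := sameCount_add_diffCount G (fun _ => b) v
  have := hdeg v
  omega

lemma three_le_degree_of_adj_of_ne (hc : IsPureTwoCycle G c) {u w : V} (huw : G.Adj u w)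
    (hne : c u ≠ c w) : 3 ≤ G.degree u := by
  have hdiff : 0 < diffCount G c u :=
    card_pos.mpr ⟨w, mem_filter.mpr ⟨(G.mem_neighborFinset u w).mpr huw, hne.symm⟩⟩
  have := (isPureTwoCycle_iff G c).mp hc u
  have := sameCount_add_diffCount G c u
  omega

end Counts

lemma SimpleGraph.Connected.exists_adj_ne {G : SimpleGraph V} (hG : G.Connected) {β : Type*}
    (c : V → β) {a b : V} (hab : c a ≠ c b) : ∃ u w, G.Adj u w ∧ c u ≠ c w := by
  obtain ⟨p⟩ := hG.preconnected a b
  obtain ⟨d, -, hd, hd'⟩ := p.exists_boundary_dart {x | c x = c a} rfl hab.symm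
  exact ⟨d.fst, d.snd, d.adj, fun h => hd' (h.symm.trans hd)⟩

/-- Color each vertex by whether it stays connected to `u` once the bridge `uw` is removed. -/
lemma SimpleGraph.IsBridge.exists_coloring {G : SimpleGraph V} {u w : V}
    (h : G.IsBridge s(u, w)) :
    ∃ c : V → Bool, c u ≠ c w ∧ ∀ x y, G.Adj x y → c x ≠ c y → s(x, y) = s(u, w) := by
  set G' := G.deleteEdges {s(u, w)}
  refine ⟨fun v => decide (G'.Reachable u v), by simpa [Reachable.refl] using isBridge_iff.mp h,
    fun x y hxy hne => ?_⟩
  by_contra hxy'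
  have hadj : G'.Adj x y := (deleteEdges_adj ..).mpr ⟨hxy, hxy'⟩
  exact hne (decide_eq_decide.mpr
    ⟨fun hr => hr.trans hadj.reachable, fun hr => hr.trans hadj.symm.reachable⟩)

section SingleBichromaticEdge

variable [Fintype V] {G : SimpleGraph V} {c : V → Bool} {e : Sym2 V}
  (he : ∀ x y, G.Adj x y → c x ≠ c y → s(x, y) = e)
include he

lemma diffCount_le_one (v : V) : diffCount G c v ≤ 1 := by
  refine card_le_one.mpr fun a ha b hb => ?_
  rw [mem_filter, mem_neighborFinset] at ha hb
  exact Sym2.congr_right.mp ((he v a ha.1 ha.2.symm).trans (he v b hb.1 hb.2.symm).symm)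

lemma diffCount_eq_zero {v : V} (hv : v ∉ e) : diffCount G c v = 0 := by
  refine card_eq_zero.mpr (eq_empty_iff_forall_notMem.mpr fun x hx => hv ?_)
  rw [mem_filter, mem_neighborFinset] at hx
  exact he v x hx.1 hx.2.symm ▸ Sym2.mem_mk_left v x

lemma isPureTwoCycle_of_forall_bichromatic_eq (hdeg : ∀ v, 0 < G.degree v)
    (hdeg_e : ∀ v ∈ e, 3 ≤ G.degree v) : IsPureTwoCycle G c := by
  refine (isPureTwoCycle_iff G c).mpr fun v => ?_
  have := sameCount_add_diffCount G c v
  by_cases hv : v ∈ e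
  · have := diffCount_le_one he v
    have := hdeg_e v hv
    omega
  · have := diffCount_eq_zero he hv
    have := hdeg v
    omega

end SingleBichromaticEdge

theorem stmt16 [Fintype V] (G : SimpleGraph V) (hT : G.IsTree)
    (hn : 2 ≤ Fintype.card V) :
    (∃ c : V → Bool, (∀ v, minStep G c v ≠ c v) ∧ minStep G (minStep G c) = c) ∧
    ((∃ c : V → Bool, ((∀ v, minStep G c v ≠ c v) ∧ minStep G (minStep G c) = c) ∧
        ¬ (∀ u w : V, c u = c w)) ↔
      ∃ u w : V, G.Adj u w ∧ 3 ≤ G.degree u ∧ 3 ≤ G.degree w) := by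
  have : Nontrivial V := Fintype.one_lt_card_iff_nontrivial.mp hn
  have hdeg : ∀ v, 0 < G.degree v := fun v => hT.connected.preconnected.degree_pos_of_nontrivial v
  refine ⟨⟨_, isPureTwoCycle_const G hdeg true⟩, ⟨?_, ?_⟩⟩
  · rintro ⟨c, hc, hnc⟩
    obtain ⟨a, b, hab⟩ : ∃ a b, c a ≠ c b := by simpa using hnc
    obtain ⟨u, w, huw, hne⟩ := hT.connected.exists_adj_ne c hab
    exact ⟨u, w, huw, three_le_degree_of_adj_of_ne G c hc huw hne,
      three_le_degree_of_adj_of_ne G c hc huw.symm hne.symm⟩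
  · rintro ⟨u, w, huw, hu, hw⟩
    obtain ⟨c, hne, he⟩ :=
      IsBridge.exists_coloring (isAcyclic_iff_forall_adj_isBridge.mp hT.isAcyclic huw)
    refine ⟨c, isPureTwoCycle_of_forall_bichromatic_eq he hdeg ?_, fun h => hne (h u w)⟩
    rintro v hv
    rcases Sym2.mem_iff.mp hv with rfl | rfl <;> assumption
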